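/- If U ≤ O_K^{*,+} is an admissible subgroup, then the restriction of l to U is injective, the composite p ∘ l restricted to U is injective, and U is a free abelian group of rank s. -/

import Mathlib

open NumberField

noncomputable section

/-- The value of an embedding `φ : K → ℂ` at a unit `u` of the ring of integers `𝓞 K`. -/
def unitVal {K : Type} [Field K] (φ : K →+* ℂ) (u : (𝓞 K)ˣ) : ℂ :=
  φ (algebraMap (𝓞 K) K (u : 𝓞 K))

/-- `u ∈ O_K^{*,+}`: `u` is a totally positive unit, i.e. all the real embeddings
`σ_1, …, σ_s` (encoded as the `Sum.inl` components of `σ`) take positive values at `u`. -/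
def IsTotPos {K : Type} [Field K] {s t : ℕ}
    (σ : Fin s ⊕ (Fin t ⊕ Fin t) → (K →+* ℂ)) (u : (𝓞 K)ˣ) : Prop :=
  ∀ i : Fin s, 0 < (unitVal (σ (Sum.inl i)) u).re

/-- The logarithmic map `l : O_K^{*,+} → ℝ^{s+t}`,
`l(a) = (log σ_1(a), …, log σ_s(a), 2 log|σ_{s+1}(a)|, …, 2 log|σ_{s+t}(a)|)`,
with `ℝ^{s+t}` realized as `(Fin s ⊕ Fin t) → ℝ`. -/
def logMapOT {K : Type} [Field K] {s t : ℕ}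
    (σ : Fin s ⊕ (Fin t ⊕ Fin t) → (K →+* ℂ)) (u : (𝓞 K)ˣ) :
    (Fin s ⊕ Fin t) → ℝ :=
  Sum.elim
    (fun i => Real.log (unitVal (σ (Sum.inl i)) u).re)
    (fun k => 2 * Real.log ‖unitVal (σ (Sum.inr (Sum.inl k))) u‖)

/-- The composite `p ∘ l : O_K^{*,+} → ℝ^s`, where `p : ℝ^{s+t} → ℝ^s` is the projection
onto the first `s` coordinates. -/
def plMapOT {K : Type} [Field K] {s t : ℕ}
    (σ : Fin s ⊕ (Fin t ⊕ Fin t) → (K →+* ℂ)) (u : (𝓞 K)ˣ) :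
    Fin s → ℝ :=
  fun i => logMapOT σ u (Sum.inl i)

lemma unitVal_mul {K : Type} [Field K] (φ : K →+* ℂ) (u v : (𝓞 K)ˣ) :
    unitVal φ (u * v) = unitVal φ u * unitVal φ v := by
  simp [unitVal, map_mul]

lemma unitVal_one {K : Type} [Field K] (φ : K →+* ℂ) :
    unitVal φ (1 : (𝓞 K)ˣ) = 1 := by
  simp [unitVal]

lemma plMapOT_apply {K : Type} [Field K] {s t : ℕ}
    (σ : Fin s ⊕ (Fin t ⊕ Fin t) → (K →+* ℂ)) (u : (𝓞 K)ˣ) (i : Fin s) :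
    plMapOT σ u i = Real.log (unitVal (σ (Sum.inl i)) u).re := rfl

lemma plMapOT_one {K : Type} [Field K] {s t : ℕ}
    (σ : Fin s ⊕ (Fin t ⊕ Fin t) → (K →+* ℂ)) :
    plMapOT σ (1 : (𝓞 K)ˣ) = 0 := by
  funext i
  rw [plMapOT_apply, unitVal_one]
  simp

lemma plMapOT_mul {K : Type} [Field K] {s t : ℕ}
    (σ : Fin s ⊕ (Fin t ⊕ Fin t) → (K →+* ℂ))
    (hσre : ∀ (i : Fin s) (x : K), ((σ (Sum.inl i)) x).im = 0)
    {u v : (𝓞 K)ˣ} (hu : IsTotPos σ u) (hv : IsTotPos σ v) :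
    plMapOT σ (u * v) = plMapOT σ u + plMapOT σ v := by
  funext i
  have h1 : (unitVal (σ (Sum.inl i)) u).im = 0 := hσre i _
  have h2 : (unitVal (σ (Sum.inl i)) v).im = 0 := hσre i _
  have hre : (unitVal (σ (Sum.inl i)) (u * v)).re
      = (unitVal (σ (Sum.inl i)) u).re * (unitVal (σ (Sum.inl i)) v).re := by
    rw [unitVal_mul, Complex.mul_re, h1, h2]; ring
  simp only [Pi.add_apply, plMapOT_apply, hre]
  rw [Real.log_mul (hu i).ne' (hv i).ne']

/-- if `U ≤ O_K^{*,+}` is an admissible subgroup (i.e. `p(l(U))` is a full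
lattice in `ℝ^s`), then `l` restricted to `U` is injective, `p ∘ l` restricted to `U` is
injective, and `U` is a free abelian group of rank `s` (isomorphic to `ℤ^s`). -/
theorem admissible_subgroup_injective_and_free_abelian_of_rank_s
    (K : Type) [Field K] [NumberField K] (s t : ℕ) (hs : 1 ≤ s) (ht : 1 ≤ t)
    (σ : Fin s ⊕ (Fin t ⊕ Fin t) → (K →+* ℂ))
    (hdeg : Module.finrank ℚ K = s + 2 * t)
    (hσbij : Function.Bijective σ)
    (hσre : ∀ (i : Fin s) (x : K), ((σ (Sum.inl i)) x).im = 0)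
    (hσnotre : ∀ k : Fin t, ∃ x : K, ((σ (Sum.inr (Sum.inl k))) x).im ≠ 0)
    (hσconj : ∀ k : Fin t,
      σ (Sum.inr (Sum.inr k)) = (starRingEnd ℂ).comp (σ (Sum.inr (Sum.inl k))))
    (U : Subgroup (𝓞 K)ˣ)
    (hUpos : ∀ u ∈ U, IsTotPos σ u)
    (hUdisc : DiscreteTopology ↥(plMapOT σ '' (U : Set (𝓞 K)ˣ)))
    (hUspan : Submodule.span ℝ (plMapOT σ '' (U : Set (𝓞 K)ˣ)) = ⊤)
    :
    Set.InjOn (logMapOT σ) (U : Set (𝓞 K)ˣ) ∧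
    Set.InjOn (plMapOT σ) (U : Set (𝓞 K)ˣ) ∧
    Nonempty (U ≃* Multiplicative (Fin s → ℤ)) := by
  set i0 : Fin s := ⟨0, hs⟩ with hi0
  have hinj : Set.InjOn (plMapOT σ) (U : Set (𝓞 K)ˣ) := by
    intro u hu v hv h
    have h0 : Real.log (unitVal (σ (Sum.inl i0)) u).re
        = Real.log (unitVal (σ (Sum.inl i0)) v).re := congrFun h i0
    have hu0 := hUpos u hu i0
    have hv0 := hUpos v hv i0
    have hre : (unitVal (σ (Sum.inl i0)) u).re = (unitVal (σ (Sum.inl i0)) v).re := by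
      rw [← Real.exp_log hu0, ← Real.exp_log hv0, h0]
    have hval : unitVal (σ (Sum.inl i0)) u = unitVal (σ (Sum.inl i0)) v :=
      Complex.ext hre (by simp only [unitVal, hσre i0])
    have hK : algebraMap (𝓞 K) K (u : 𝓞 K) = algebraMap (𝓞 K) K (v : 𝓞 K) :=
      (σ (Sum.inl i0)).injective hval
    exact Units.ext (FaithfulSMul.algebraMap_injective (𝓞 K) K hK)
  refine ⟨fun u hu v hv h => hinj hu hv (funext fun i => congrFun h (Sum.inl i)),
    hinj, ?_⟩
  have hmul : ∀ u ∈ U, ∀ v ∈ U, plMapOT σ (u * v) = plMapOT σ u + plMapOT σ v :=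
    fun u hu v hv => plMapOT_mul σ hσre (hUpos u hu) (hUpos v hv)
  let L0 : AddSubgroup (Fin s → ℝ) :=
    { carrier := plMapOT σ '' (U : Set (𝓞 K)ˣ)
      zero_mem' := ⟨1, U.one_mem, plMapOT_one σ⟩
      add_mem' := by
        rintro a b ⟨u, hu, rfl⟩ ⟨v, hv, rfl⟩
        exact ⟨u * v, U.mul_mem hu hv, hmul u hu v hv⟩
      neg_mem' := by
        rintro a ⟨u, hu, rfl⟩
        refine ⟨u⁻¹, U.inv_mem hu, ?_⟩
        have h := hmul u hu u⁻¹ (U.inv_mem hu)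
        rw [mul_inv_cancel, plMapOT_one σ] at h
        exact (neg_eq_of_add_eq_zero_right h.symm).symm }
  let L : Submodule ℤ (Fin s → ℝ) := AddSubgroup.toIntSubmodule L0
  haveI : DiscreteTopology L := hUdisc
  haveI : IsZLattice ℝ L := ⟨hUspan⟩
  haveI := ZLattice.module_free ℝ L
  haveI := ZLattice.module_finite ℝ L
  have hrank : Module.finrank ℤ L = s := by
    rw [ZLattice.rank ℝ L]
    simp
  let b := Module.finBasis ℤ ↥L
  let e : ↥L ≃ₗ[ℤ] (Fin s → ℤ) := (b.reindex (finCongr hrank)).equivFun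
  let f : U → Multiplicative ↥L :=
    fun u => Multiplicative.ofAdd (⟨plMapOT σ ↑u, ⟨↑u, u.2, rfl⟩⟩ : ↥L)
  have hbij : Function.Bijective f := by
    constructor
    · intro u v huv
      have : plMapOT σ ↑u = plMapOT σ ↑v := congrArg Subtype.val huv
      exact Subtype.ext (hinj u.2 v.2 this)
    · rintro ⟨x, hx⟩
      obtain ⟨u, hu, rfl⟩ := hx
      exact ⟨⟨u, hu⟩, rfl⟩
  let e0 : U ≃* Multiplicative ↥L :=
    { Equiv.ofBijective f hbij with
      map_mul' := fun u v => Subtype.ext (hmul ↑u u.2 ↑v v.2) }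
  exact ⟨e0.trans (AddEquiv.toMultiplicative e.toAddEquiv)⟩
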